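/- Let G' be constructed from a graph G with n vertices and m edges as follows: take a clique H_V on n^3 vertices containing the vertices of G, a clique H_E on m vertices identified with the edges of G, and join v ∈ H_V to e ∈ H_E whenever v is incident to e in G. If G has a clique K of size k, then the set X = {e ∈ H_E : both endpoints of e lie in K} satisfies |X| = C(k,2) and |N_{G'}(X)| = k + m − C(k,2). -/

import Mathlib

open SimpleGraph

/-- Open neighborhood of a vertex set: vertices outside `X` adjacent to some vertex of `X`. -/
def vb {V : Type*} (G : SimpleGraph V) (X : Set V) : Set V :=
  {v | v ∉ X ∧ ∃ u ∈ X, G.Adj u v}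

/-- Vertices reachable from the set `X` in `G - S`. -/
def reachAvoid {V : Type*} (G : SimpleGraph V) (S X : Set V) : Set V :=
  {v | ∃ x ∈ X, ∃ p : G.Walk x v, ∀ w ∈ p.support, w ∉ S}

/-- `S` is a vertex `(X,Y)`-separator. -/
def isSep {V : Type*} (G : SimpleGraph V) (X Y S : Set V) : Prop :=
  S ⊆ (X ∪ Y)ᶜ ∧ ∀ y ∈ Y, y ∉ reachAvoid G S X

/-- `S` is an important `(X,Y)`-separator. -/
def isImpSep {V : Type*} (G : SimpleGraph V) (X Y S : Set V) : Prop :=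
  isSep G X Y S ∧ (∀ S' ⊂ S, ¬ isSep G X Y S') ∧
    ¬ ∃ T, isSep G X Y T ∧ T.ncard ≤ S.ncard ∧ reachAvoid G S X ⊂ reachAvoid G T X

/-- Edge boundary of a vertex set. -/
def edgeBoundary {V : Type*} (G : SimpleGraph V) (X : Set V) : Set (Sym2 V) :=
  {e | ∃ a b, e = s(a, b) ∧ G.Adj a b ∧ a ∈ X ∧ b ∉ X}

/-- The graph `G'` built from `G`: a clique `H_V` on the vertex type `W` (containing the
vertices of `G` via `ι`), a clique `H_E` on the edges of `G`, and `v` joined to `e`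
whenever `v` is incident to `e`. -/
def cliqueCutGraph {V W : Type*} (G : SimpleGraph V) (ι : V ↪ W) :
    SimpleGraph (W ⊕ G.edgeSet) :=
  SimpleGraph.fromRel (fun x y =>
    match x, y with
    | Sum.inl _, Sum.inl _ => True
    | Sum.inr _, Sum.inr _ => True
    | Sum.inl w, Sum.inr e => ∃ v, ι v = w ∧ v ∈ (e : Sym2 V)
    | _, _ => False)

/-- If `G` has a `k`-clique `K`, then the set of edge-vertices with both endpoints in `K`
has size `C(k,2)` and neighborhood of size `k + m - C(k,2)` in `G'`. -/
theorem clique_gives_small_cut {V W : Type*} [Fintype V] [Fintype W] [DecidableEq V]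
    (G : SimpleGraph V) [DecidableRel G.Adj] (ι : V ↪ W) (n m k : ℕ)
    (hn : Fintype.card V = n) (hm : G.edgeSet.ncard = m) (hW : Fintype.card W = n ^ 3)
    (hk : 2 ≤ k) (hkn : k ≤ n) (K : Finset V) (hK : G.IsNClique k K) :
    let X : Set (W ⊕ G.edgeSet) :=
      {x | ∃ e : G.edgeSet, x = Sum.inr e ∧ ∀ v ∈ (e : Sym2 V), v ∈ K}
    X.ncard = k.choose 2 ∧
      (vb (cliqueCutGraph G ι) X).ncard = k + m - k.choose 2 := by
  intro X
  classical
  -- the set of edge-vertices inside K, as a subset of the edge subtype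
  set EK : Set G.edgeSet := {e | ∀ v ∈ (e : Sym2 V), v ∈ K} with hEK
  have hXeq : X = Sum.inr '' EK := by
    ext x
    constructor
    · rintro ⟨e, rfl, he⟩; exact ⟨e, he, rfl⟩
    · rintro ⟨e, he, rfl⟩; exact ⟨e, rfl, he⟩
  -- EK as a Finset of Sym2 V
  have hval : Subtype.val '' EK = ↑(K.offDiag.image Sym2.mk.uncurry) := by
    ext e
    simp only [Set.mem_image, Finset.coe_image, Set.mem_setOf_eq]
    constructor
    · rintro ⟨⟨e, he⟩, hmem, rfl⟩
      obtain ⟨a, b, rfl⟩ := Sym2.exists.mp ⟨e, rfl⟩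
      have hadj : G.Adj a b := he
      refine ⟨(a, b), ?_, rfl⟩
      simp only [Finset.coe_offDiag, Set.mem_offDiag]
      exact ⟨hmem a (by simp), hmem b (by simp), hadj.ne⟩
    · rintro ⟨⟨a, b⟩, hab, rfl⟩
      simp only [Finset.coe_offDiag, Set.mem_offDiag] at hab
      obtain ⟨ha, hb, hne⟩ := hab
      have hadj : G.Adj a b := hK.isClique ha hb hne
      refine ⟨⟨s(a, b), hadj⟩, ?_, rfl⟩
      intro v hv
      rcases Sym2.mem_iff.mp hv with rfl | rfl <;> assumption
  have hEKcard : EK.ncard = k.choose 2 := by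
    have h1 : EK.ncard = (Subtype.val '' EK).ncard :=
      (Set.ncard_image_of_injective _ Subtype.val_injective).symm
    rw [h1, hval, Set.ncard_coe_finset, Sym2.card_image_offDiag, hK.card_eq]
  have hX1 : X.ncard = k.choose 2 := by
    rw [hXeq, Set.ncard_image_of_injective _ Sum.inr_injective, hEKcard]
  refine ⟨hX1, ?_⟩
  -- X is nonempty
  obtain ⟨a, haK, b, hbK, hne⟩ := Finset.one_lt_card.mp (by rw [hK.card_eq]; exact hk)
  have hab : G.Adj a b := hK.isClique haK hbK hne
  have habEK : (⟨s(a, b), hab⟩ : G.edgeSet) ∈ EK := by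
    intro v hv; rcases Sym2.mem_iff.mp hv with rfl | rfl <;> assumption
  -- description of the neighborhood
  have hvb : vb (cliqueCutGraph G ι) X =
      (Sum.inl '' (ι '' ↑K)) ∪ (Sum.inr '' EKᶜ) := by
    ext x
    constructor
    · rintro ⟨hxX, u, huX, hadj⟩
      rw [hXeq] at huX
      obtain ⟨e, heEK, rfl⟩ := huX
      rw [cliqueCutGraph, SimpleGraph.fromRel_adj] at hadj
      obtain ⟨hne', hrel⟩ := hadj
      cases x with
      | inl w =>
        left
        have : ∃ v, ι v = w ∧ v ∈ (e : Sym2 V) := by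
          rcases hrel with h | h
          · exact h.elim
          · exact h
        obtain ⟨v, rfl, hve⟩ := this
        exact ⟨ι v, ⟨v, heEK v hve, rfl⟩, rfl⟩
      | inr e' =>
        right
        refine ⟨e', ?_, rfl⟩
        intro he'EK
        exact hxX (hXeq ▸ ⟨e', he'EK, rfl⟩)
    · rintro (⟨w, ⟨v, hvK, rfl⟩, rfl⟩ | ⟨e', he', rfl⟩)
      · obtain ⟨u, huK, hune⟩ := Finset.exists_mem_ne (by rw [hK.card_eq]; exact hk) v
        have hadj_vu : G.Adj v u := hK.isClique hvK huK (Ne.symm hune)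
        have hEv : (⟨s(v, u), hadj_vu⟩ : G.edgeSet) ∈ EK := by
          intro w hw; rcases Sym2.mem_iff.mp hw with rfl | rfl <;> assumption
        refine ⟨?_, Sum.inr ⟨s(v, u), hadj_vu⟩, hXeq ▸ ⟨_, hEv, rfl⟩, ?_⟩
        · rintro ⟨e, he, -⟩; exact absurd he (by simp)
        · rw [cliqueCutGraph, SimpleGraph.fromRel_adj]
          exact ⟨by simp, Or.inr ⟨v, rfl, by simp⟩⟩
      · refine ⟨?_, ?_⟩
        · rintro ⟨e, he, hmem⟩
          rw [Sum.inr.injEq] at he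
          exact he' (he ▸ hmem)
        · -- pick an edge of EK different from e'
          refine ⟨Sum.inr ⟨s(a, b), hab⟩, hXeq ▸ ⟨_, habEK, rfl⟩, ?_⟩
          rw [cliqueCutGraph, SimpleGraph.fromRel_adj]
          refine ⟨?_, Or.inl trivial⟩
          intro h
          rw [Sum.inr.injEq] at h
          exact he' (h ▸ habEK)
  rw [hvb]
  have hdisj : Disjoint (Sum.inl '' (ι '' ↑K) : Set (W ⊕ G.edgeSet)) (Sum.inr '' EKᶜ) := by
    rw [Set.disjoint_iff_forall_ne]
    rintro x ⟨w, -, rfl⟩ y ⟨e, -, rfl⟩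
    simp
  rw [Set.ncard_union_eq hdisj (Set.toFinite _) (Set.toFinite _)]
  have h1 : (Sum.inl '' (ι '' ↑K) : Set (W ⊕ G.edgeSet)).ncard = k := by
    rw [Set.ncard_image_of_injective _ Sum.inl_injective,
      Set.ncard_image_of_injective _ ι.injective, Set.ncard_coe_finset, hK.card_eq]
  have hmcard : Nat.card G.edgeSet = m := by
    rw [Nat.card_coe_set_eq, hm]
  have h2 : (EKᶜ : Set G.edgeSet).ncard = m - k.choose 2 := by
    have := Set.ncard_add_ncard_compl EK (Set.toFinite _) (Set.toFinite _)
    omega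
  have hle : k.choose 2 ≤ m := by
    have := Set.ncard_le_ncard (Set.subset_univ EK) (Set.toFinite _)
    rw [Set.ncard_univ, hmcard] at this
    omega
  rw [h1, Set.ncard_image_of_injective _ Sum.inr_injective, h2]
  omega
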